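/- In the random-binning Slepian–Wolf scheme with minimum-joint-entropy decoding, the probability of error event E₁ (some y₁' ≠ Y₁ in the same bin as Y₁ with H_{y₁', Y₂}(Y₁|Y₂) ≤ H_{Y₁, Y₂}(Y₁|Y₂), while (Y₁,Y₂) is typical) is at most (n+1)^{|𝒴₁||𝒴₂|} · 2^{-nR₁} · 2^{n(H(Y₁|Y₂)+2ε)}; consequently if R₁ > H(Y₁|Y₂)+2ε then Pr(E₁) → 0 as n → ∞. -/

import Mathlib

open Real Filter

/-- Empirical joint type of the pair of sequences `(y₁, y₂)`. -/
noncomputable def jointType {A B : Type*} [DecidableEq A] [DecidableEq B] {n : ℕ}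
    (y₁ : Fin n → A) (y₂ : Fin n → B) (a : A) (b : B) : ℝ :=
  ((Finset.univ.filter (fun k => y₁ k = a ∧ y₂ k = b)).card : ℝ) / n

/-- Empirical type of the sequence `y₂`. -/
noncomputable def margType {B : Type*} [DecidableEq B] {n : ℕ} (y₂ : Fin n → B) (b : B) : ℝ :=
  ((Finset.univ.filter (fun k => y₂ k = b)).card : ℝ) / n

/-- Empirical conditional entropy (in bits) `H_{y₁,y₂}(Y₁ | Y₂)` induced by `(y₁, y₂)`. -/
noncomputable def empCondEntropy {A B : Type*} [Fintype A] [Fintype B]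
    [DecidableEq A] [DecidableEq B] {n : ℕ} (y₁ : Fin n → A) (y₂ : Fin n → B) : ℝ :=
  -∑ a : A, ∑ b : B, jointType y₁ y₂ a b * logb 2 (jointType y₁ y₂ a b / margType y₂ b)

/-!
Fix a pair `(y₁, y₂)`. Two distinct sequences fall into the same bin with probability `1/M`, so by
the union bound over the competitors `y₁'` the collision probability is at most
`#{y₁' | H_{y₁',y₂} ≤ H_{y₁,y₂}} / M`. That set is covered by at most `(n+1)^{|A||B|}` conditional
type classes, and the class of `z` has at most `2^{n H_{z,y₂}}` elements: the product measure
`∏ₖ W(y₁'ₖ | y₂ₖ)`, where `W` is the empirical conditional distribution of `z` given `y₂`, has total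
mass one and gives every member of the class the mass `2^{-n H_{z,y₂}}`. Averaging over the
source costs nothing, since the probabilities of the typical pairs sum to at most one.
-/

open Finset

section RandomBinning

variable {α β : Type*} [Fintype α] [DecidableEq α] [Fintype β] [DecidableEq β]

theorem card_filter_apply_eq_apply_mul_card {c d : α} (hcd : c ≠ d) :
    #{f : α → β | f c = f d} * Fintype.card β = Fintype.card β ^ Fintype.card α := by
  let e : {f : α → β // f c = f d} × β ≃ (α → β) :=
    { toFun := fun p => Function.update p.1.val c p.2
      invFun := fun g => (⟨Function.update g c (g d), by
          rw [Function.update_self, Function.update_of_ne hcd.symm]⟩, g c)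
      left_inv := fun ⟨⟨f, hf⟩, v⟩ => by
        refine Prod.ext (Subtype.ext ?_) (by simp)
        simp only [Function.update_idem, Function.update_of_ne hcd.symm]
        rw [← hf, Function.update_eq_self]
      right_inv := fun g => by simp only [Function.update_idem, Function.update_eq_self] }
  simpa [Fintype.card_subtype] using Fintype.card_congr e

theorem card_filter_exists_apply_eq_apply_mul_card_le (d : α) (s : Finset α) (hd : d ∉ s) :
    #{f : α → β | ∃ x ∈ s, f x = f d} * Fintype.card β ≤ #s * Fintype.card β ^ Fintype.card α := by
  have hunion : ({f : α → β | ∃ x ∈ s, f x = f d} : Finset _)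
      = s.biUnion fun x => {f | f x = f d} := by
    ext f; simp
  calc #{f : α → β | ∃ x ∈ s, f x = f d} * Fintype.card β
      ≤ (∑ x ∈ s, #{f : α → β | f x = f d}) * Fintype.card β := by
        rw [hunion]; gcongr; exact card_biUnion_le
    _ = #s * Fintype.card β ^ Fintype.card α := by
        rw [sum_mul, sum_congr rfl fun x hx => card_filter_apply_eq_apply_mul_card
          (ne_of_mem_of_not_mem hx hd), sum_const, smul_eq_mul]

theorem ncard_exists_ne_apply_eq_apply_div_le [Nonempty β] (d : α) (P : α → Prop)
    [DecidablePred P] :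
    (Set.ncard {f : α → β | ∃ x, x ≠ d ∧ f x = f d ∧ P x} : ℝ) / Fintype.card β ^ Fintype.card α
      ≤ #{x | P x} / Fintype.card β := by
  have hset : {f : α → β | ∃ x, x ≠ d ∧ f x = f d ∧ P x}
      = ↑({f : α → β | ∃ x ∈ ({x | P x ∧ x ≠ d} : Finset α), f x = f d} : Finset _) := by
    ext f; simpa using exists_congr fun x => by tauto
  have hcount := card_filter_exists_apply_eq_apply_mul_card_le (β := β) d {x | P x ∧ x ≠ d}
    (by simp)
  have hsub : #({x | P x ∧ x ≠ d} : Finset α) ≤ #{x | P x} := card_le_card fun x => by simp_all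
  rw [hset, Set.ncard_coe_finset, div_le_div_iff₀ (by positivity) (by positivity)]
  calc _ ≤ ((#({x | P x ∧ x ≠ d} : Finset α) * Fintype.card β ^ Fintype.card α : ℕ) : ℝ) := by
        exact_mod_cast hcount
    _ ≤ _ := by push_cast; gcongr

end RandomBinning

section EmpiricalTypes

variable {A B : Type*} [DecidableEq A] [DecidableEq B] {n : ℕ}

def jointCount (y₁ : Fin n → A) (y₂ : Fin n → B) (a : A) (b : B) : ℕ :=
  #{k | y₁ k = a ∧ y₂ k = b}

def margCount (y₂ : Fin n → B) (b : B) : ℕ :=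
  #{k | y₂ k = b}

theorem jointType_eq_jointCount_div (y₁ : Fin n → A) (y₂ : Fin n → B) (a : A) (b : B) :
    jointType y₁ y₂ a b = jointCount y₁ y₂ a b / n := rfl

theorem margType_eq_margCount_div (y₂ : Fin n → B) (b : B) :
    margType y₂ b = margCount y₂ b / n := rfl

theorem sum_jointCount [Fintype A] (y₁ : Fin n → A) (y₂ : Fin n → B) (b : B) :
    ∑ a, jointCount y₁ y₂ a b = margCount y₂ b := by
  rw [margCount, card_eq_sum_card_fiberwise fun k _ => mem_univ (y₁ k)]
  refine sum_congr rfl fun a _ => ?_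
  rw [jointCount, filter_filter]
  simp only [and_comm]

theorem jointCount_le_margCount (y₁ : Fin n → A) (y₂ : Fin n → B) (a : A) (b : B) :
    jointCount y₁ y₂ a b ≤ margCount y₂ b :=
  card_le_card <| monotone_filter_right _ fun _ _ h => h.2

theorem jointCount_lt_succ (y₁ : Fin n → A) (y₂ : Fin n → B) (a : A) (b : B) :
    jointCount y₁ y₂ a b < n + 1 :=
  Nat.lt_succ_of_le <| (card_filter_le _ _).trans_eq (card_fin n)

theorem jointCount_apply_pos (y₁ : Fin n → A) (y₂ : Fin n → B) (k : Fin n) :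
    0 < jointCount y₁ y₂ (y₁ k) (y₂ k) :=
  card_pos.mpr ⟨k, by simp⟩

variable [Fintype A] [Fintype B]

def condTypeClass (y₂ : Fin n → B) (z : Fin n → A) : Finset (Fin n → A) :=
  {y₁ | ∀ a b, jointCount y₁ y₂ a b = jointCount z y₂ a b}

theorem mem_condTypeClass {y₂ : Fin n → B} {y₁ z : Fin n → A} :
    y₁ ∈ condTypeClass y₂ z ↔ ∀ a b, jointCount y₁ y₂ a b = jointCount z y₂ a b := by
  simp [condTypeClass]

theorem empCondEntropy_congr {y₁ z : Fin n → A} {y₂ : Fin n → B}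
    (h : ∀ a b, jointCount y₁ y₂ a b = jointCount z y₂ a b) :
    empCondEntropy y₁ y₂ = empCondEntropy z y₂ := by
  simp only [empCondEntropy, jointType_eq_jointCount_div, h]

theorem neg_mul_empCondEntropy_eq_sum (hn : 0 < n) (y₁ : Fin n → A) (y₂ : Fin n → B) :
    -(n * empCondEntropy y₁ y₂) = ∑ ab : A × B, (jointCount y₁ y₂ ab.1 ab.2 : ℝ) *
      logb 2 (jointCount y₁ y₂ ab.1 ab.2 / margCount y₂ ab.2) := by
  have hn' : (n : ℝ) ≠ 0 := by positivity
  simp only [empCondEntropy, jointType_eq_jointCount_div, margType_eq_margCount_div,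
    Fintype.sum_prod_type, mul_neg, neg_neg, mul_sum, div_div_div_cancel_right₀ hn', ← mul_assoc,
    mul_div_cancel₀ _ hn']

theorem prod_jointCount_div_margCount (y₁ : Fin n → A) (y₂ : Fin n → B) :
    ∏ k, (jointCount y₁ y₂ (y₁ k) (y₂ k) / margCount y₂ (y₂ k) : ℝ)
      = 2 ^ (-(n * empCondEntropy y₁ y₂)) := by
  rcases n.eq_zero_or_pos with rfl | hn
  · simp
  set q : A × B → ℝ := fun ab => jointCount y₁ y₂ ab.1 ab.2 / margCount y₂ ab.2
  have hq : ∀ k, 0 < q (y₁ k, y₂ k) := fun k => div_pos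
    (mod_cast jointCount_apply_pos y₁ y₂ k)
    (mod_cast (jointCount_apply_pos y₁ y₂ k).trans_le (jointCount_le_margCount ..))
  have hlog : logb 2 (∏ k, q (y₁ k, y₂ k)) = -(n * empCondEntropy y₁ y₂) := by
    rw [logb_prod _ _ fun k _ => (hq k).ne', neg_mul_empCondEntropy_eq_sum hn,
      ← sum_fiberwise univ (fun k => (y₁ k, y₂ k))]
    refine sum_congr rfl fun ab _ => ?_
    rw [sum_congr rfl fun k hk => by rw [(mem_filter.mp hk).2], sum_const, nsmul_eq_mul]
    congr 2
    simp only [jointCount, Prod.ext_iff]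
  rw [← hlog, rpow_logb two_pos (by norm_num) (prod_pos fun k _ => hq k)]

theorem card_condTypeClass_le (y₂ : Fin n → B) (z : Fin n → A) :
    (#(condTypeClass y₂ z) : ℝ) ≤ 2 ^ (n * empCondEntropy z y₂) := by
  set w : (Fin n → A) → ℝ :=
    fun y₁ => ∏ k, (jointCount z y₂ (y₁ k) (y₂ k) / margCount y₂ (y₂ k) : ℝ)
  have hw_sum : ∑ y₁, w y₁ = 1 := by
    rw [← Fintype.prod_sum (fun k a => (jointCount z y₂ a (y₂ k) / margCount y₂ (y₂ k) : ℝ))]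
    refine prod_eq_one fun k _ => ?_
    rw [← sum_div, ← Nat.cast_sum, sum_jointCount,
      div_self (mod_cast ((jointCount_apply_pos z y₂ k).trans_le (jointCount_le_margCount ..)).ne')]
  have hw_class : ∀ y₁ ∈ condTypeClass y₂ z,
      w y₁ = 2 ^ (-(n * empCondEntropy z y₂)) := fun y₁ hy₁ => by
    have h := mem_condTypeClass.mp hy₁
    simp only [w, ← h, prod_jointCount_div_margCount, empCondEntropy_congr h]
  have hmass : ∑ y₁ ∈ condTypeClass y₂ z, w y₁ ≤ 1 :=
    hw_sum ▸ sum_le_univ_sum_of_nonneg fun y₁ => prod_nonneg fun k _ => by positivity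
  rwa [sum_congr rfl hw_class, sum_const, nsmul_eq_mul, rpow_neg zero_le_two, ← div_eq_mul_inv,
    div_le_one (by positivity)] at hmass

theorem card_filter_empCondEntropy_le (y₂ : Fin n → B) (H : ℝ) :
    (#{y₁ : Fin n → A | empCondEntropy y₁ y₂ ≤ H} : ℝ)
      ≤ (n + 1 : ℝ) ^ (Fintype.card A * Fintype.card B) * 2 ^ (n * H) := by
  set s : Finset (Fin n → A) := {y₁ | empCondEntropy y₁ y₂ ≤ H}
  set T : (Fin n → A) → A × B → Fin (n + 1) :=
    fun y₁ ab => ⟨jointCount y₁ y₂ ab.1 ab.2, jointCount_lt_succ ..⟩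
  have hfiber : ∀ t ∈ s.image T, (#{y₁ ∈ s | T y₁ = t} : ℝ) ≤ 2 ^ (n * H) := by
    intro t ht
    obtain ⟨z, hz, rfl⟩ := mem_image.mp ht
    calc (#{y₁ ∈ s | T y₁ = T z} : ℝ)
        ≤ #(condTypeClass y₂ z) := by
          refine mod_cast card_le_card fun y₁ hy₁ => mem_condTypeClass.mpr fun a b => ?_
          exact congrArg Fin.val (congrFun (mem_filter.mp hy₁).2 (a, b))
      _ ≤ 2 ^ (n * empCondEntropy z y₂) := card_condTypeClass_le y₂ z
      _ ≤ 2 ^ (n * H) := by gcongr; norm_num; exact (mem_filter.mp hz).2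
  have htypes : (#(s.image T) : ℝ) ≤ (n + 1 : ℝ) ^ (Fintype.card A * Fintype.card B) := by
    have := (card_le_univ (s.image T)).trans_eq (by simp [Fintype.card_prod] :
      Fintype.card (A × B → Fin (n + 1)) = (n + 1) ^ (Fintype.card A * Fintype.card B))
    exact_mod_cast this
  calc (#s : ℝ) = ∑ t ∈ s.image T, (#{y₁ ∈ s | T y₁ = t} : ℝ) := by
        exact_mod_cast card_eq_sum_card_image T s
    _ ≤ #(s.image T) * 2 ^ (n * H) := by
      simpa only [nsmul_eq_mul] using sum_le_card_nsmul _ _ _ hfiber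
    _ ≤ _ := by gcongr

theorem ncard_binning_collision_div_le (y₁ : Fin n → A) (y₂ : Fin n → B) {M : ℕ} (hM : 0 < M)
    {H : ℝ} (hH : empCondEntropy y₁ y₂ ≤ H) :
    (Set.ncard {f : (Fin n → A) → Fin M | ∃ y₁' : Fin n → A, y₁' ≠ y₁ ∧ f y₁' = f y₁ ∧
        empCondEntropy y₁' y₂ ≤ empCondEntropy y₁ y₂} : ℝ) / (M : ℝ) ^ Fintype.card (Fin n → A)
      ≤ (n + 1 : ℝ) ^ (Fintype.card A * Fintype.card B) * 2 ^ (n * H) / M := by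
  have : Nonempty (Fin M) := Fin.pos_iff_nonempty.mp hM
  calc _ ≤ (#{y₁' : Fin n → A | empCondEntropy y₁' y₂ ≤ empCondEntropy y₁ y₂} : ℝ) / M := by
        have := ncard_exists_ne_apply_eq_apply_div_le (β := Fin M) y₁
          (fun y₁' => empCondEntropy y₁' y₂ ≤ empCondEntropy y₁ y₂)
        rwa [Fintype.card_fin] at this
    _ ≤ (#{y₁' : Fin n → A | empCondEntropy y₁' y₂ ≤ H} : ℝ) / M := by gcongr
    _ ≤ _ := by gcongr; exact card_filter_empCondEntropy_le y₂ H

end EmpiricalTypes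

theorem sum_prod_le_one {ι α β : Type*} [Fintype ι] [DecidableEq ι] [Fintype α] [Fintype β]
    (p : α × β → ℝ) (hp0 : ∀ x, 0 ≤ p x) (hp1 : ∑ x, p x = 1) (s : Finset ((ι → α) × (ι → β))) :
    ∑ y ∈ s, ∏ k, p (y.1 k, y.2 k) ≤ 1 := by
  calc ∑ y ∈ s, ∏ k, p (y.1 k, y.2 k) ≤ ∑ y, ∏ k, p (y.1 k, y.2 k) :=
        sum_le_univ_sum_of_nonneg fun y => prod_nonneg fun k _ => hp0 _
    _ = ∑ x : ι → α × β, ∏ k, p (x k) :=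
        (Fintype.sum_equiv (Equiv.arrowProdEquivProdArrow ι _ _).symm _ _ fun _ => rfl)
    _ = 1 := by rw [← Fintype.prod_sum fun _ => p, hp1, prod_const_one]

theorem tendsto_succ_pow_mul_two_rpow_atTop_nhds_zero (K : ℕ) {c : ℝ} (hc : c < 0) :
    Tendsto (fun m : ℕ => ((m : ℝ) + 1) ^ K * 2 ^ (m * c)) atTop (nhds 0) := by
  set r : ℝ := 2 ^ c
  have hr0 : 0 < r := by positivity
  have hshift :
      Tendsto (fun m : ℕ => r⁻¹ * (((m + 1 : ℕ) : ℝ) ^ K * r ^ (m + 1))) atTop (nhds 0) := by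
    simpa using ((tendsto_pow_const_mul_const_pow_of_lt_one K hr0.le
      (rpow_lt_one_of_one_lt_of_neg one_lt_two hc)).comp (tendsto_add_atTop_nat 1)).const_mul r⁻¹
  refine hshift.congr fun m => ?_
  rw [mul_comm (m : ℝ), rpow_mul zero_le_two, rpow_natCast, pow_succ]
  field_simp
  push_cast
  ring

theorem binning_error_E1_bound_general
    {A B : Type*} [Fintype A] [Fintype B] [DecidableEq A] [DecidableEq B]
    (p : A × B → ℝ) (hp0 : ∀ x, 0 ≤ p x) (hp1 : ∑ x, p x = 1)
    (n : ℕ) (ε R₁ : ℝ) (hε : 0 ≤ ε)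
    (M : ℕ) (hM : (2 : ℝ) ^ ((n : ℝ) * R₁) ≤ (M : ℝ))
    (Hcond : ℝ)
    (Aε : Finset ((Fin n → A) × (Fin n → B)))
    (hAε : ∀ y ∈ Aε, empCondEntropy y.1 y.2 ≤ Hcond + ε) :
    (∑ y ∈ Aε, (∏ k, p (y.1 k, y.2 k)) *
        (((Set.ncard {f : (Fin n → A) → Fin M |
            ∃ y₁' : Fin n → A, y₁' ≠ y.1 ∧ f y₁' = f y.1 ∧
              empCondEntropy y₁' y.2 ≤ empCondEntropy y.1 y.2}) : ℝ)
          / (M : ℝ) ^ (Fintype.card (Fin n → A)))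
      ≤ ((n : ℝ) + 1) ^ (Fintype.card A * Fintype.card B)
          * 2 ^ (-(n : ℝ) * R₁) * 2 ^ ((n : ℝ) * (Hcond + 2 * ε))) ∧
    (R₁ > Hcond + 2 * ε →
      Tendsto (fun m : ℕ => ((m : ℝ) + 1) ^ (Fintype.card A * Fintype.card B)
          * 2 ^ (-(m : ℝ) * R₁) * 2 ^ ((m : ℝ) * (Hcond + 2 * ε)))
        atTop (nhds 0)) := by
  set K := Fintype.card A * Fintype.card B
  refine ⟨?_, fun hR => ?_⟩
  · have hM_pos : (0 : ℝ) < M := (rpow_pos_of_pos two_pos _).trans_le hM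
    have hbound : ((n : ℝ) + 1) ^ K * 2 ^ ((n : ℝ) * (Hcond + ε)) / M
        ≤ ((n : ℝ) + 1) ^ K * 2 ^ (-(n : ℝ) * R₁) * 2 ^ ((n : ℝ) * (Hcond + 2 * ε)) := by
      rw [div_eq_mul_inv, mul_right_comm]
      gcongr
      · rw [neg_mul, rpow_neg zero_le_two]
        exact inv_anti₀ (by positivity) hM
      · norm_num
      · linarith
    calc _ ≤ ∑ y ∈ Aε, (∏ k, p (y.1 k, y.2 k)) * (((n : ℝ) + 1) ^ K * 2 ^ (-(n : ℝ) * R₁)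
          * 2 ^ ((n : ℝ) * (Hcond + 2 * ε))) :=
          sum_le_sum fun y hy => mul_le_mul_of_nonneg_left
            ((ncard_binning_collision_div_le y.1 y.2 (mod_cast hM_pos) (hAε y hy)).trans hbound)
            (prod_nonneg fun k _ => hp0 _)
      _ ≤ _ := by
          rw [← sum_mul]
          exact mul_le_of_le_one_left (by positivity) (sum_prod_le_one p hp0 hp1 Aε)
  · refine (tendsto_succ_pow_mul_two_rpow_atTop_nhds_zero K (sub_neg.mpr hR)).congr fun m => ?_
    rw [mul_assoc, ← rpow_add two_pos]
    ring_nf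

/-- Random-binning error bound for the event `E₁`: the source-averaged probability (over the
i.i.d. source and the uniformly random bin assignment `f₁` into `M ≥ 2^{nR₁}` bins) that some
`y₁' ≠ Y₁` shares `Y₁`'s bin with no larger empirical conditional entropy, while `(Y₁, Y₂)`
is typical, is at most `(n+1)^{|𝒴₁||𝒴₂|}·2^{-nR₁}·2^{n(H(Y₁|Y₂)+2ε)}`; consequently, if
`R₁ > H(Y₁|Y₂) + 2ε` this bound tends to `0` as `n → ∞`. -/
theorem binning_error_E1_bound
    {A B : Type*} [Fintype A] [Fintype B] [DecidableEq A] [DecidableEq B]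
    (p : A × B → ℝ) (hp0 : ∀ x, 0 ≤ p x) (hp1 : ∑ x, p x = 1)
    (n : ℕ) (hn : 0 < n) (ε R₁ : ℝ) (hε : 0 ≤ ε)
    (M : ℕ) (hM0 : 0 < M) (hM : (2 : ℝ) ^ ((n : ℝ) * R₁) ≤ (M : ℝ))
    (Hcond : ℝ)
    (hHcond : Hcond = (-∑ x : A × B, p x * logb 2 (p x))
      - (-∑ b : B, (∑ a : A, p (a, b)) * logb 2 (∑ a : A, p (a, b))))
    (Aε : Finset ((Fin n → A) × (Fin n → B)))
    (hAε : ∀ y ∈ Aε, empCondEntropy y.1 y.2 ≤ Hcond + ε) :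
    (∑ y ∈ Aε, (∏ k, p (y.1 k, y.2 k)) *
        (((Set.ncard {f : (Fin n → A) → Fin M |
            ∃ y₁' : Fin n → A, y₁' ≠ y.1 ∧ f y₁' = f y.1 ∧
              empCondEntropy y₁' y.2 ≤ empCondEntropy y.1 y.2}) : ℝ)
          / (M : ℝ) ^ (Fintype.card (Fin n → A)))
      ≤ ((n : ℝ) + 1) ^ (Fintype.card A * Fintype.card B)
          * 2 ^ (-(n : ℝ) * R₁) * 2 ^ ((n : ℝ) * (Hcond + 2 * ε))) ∧
    (R₁ > Hcond + 2 * ε →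
      Tendsto (fun m : ℕ => ((m : ℝ) + 1) ^ (Fintype.card A * Fintype.card B)
          * 2 ^ (-(m : ℝ) * R₁) * 2 ^ ((m : ℝ) * (Hcond + 2 * ε)))
        atTop (nhds 0)) :=
  binning_error_E1_bound_general p hp0 hp1 n ε R₁ hε M hM Hcond Aε hAε
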